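/- Performance of Approximate Value Iteration in case of convergence: run Approximate Value Iteration v_{k+1} = T v_k + ε_{k+1} and suppose the sequence v_k converges to some v; let π be a policy greedy with respect to v. Let ν be a distribution with ν(j) > 0 for all j, C(ν) = max_{i,j,a} p(i,a,j)/ν(j), and p ≥ 1. Then ‖v_* − v^π‖_∞ ≤ (2γ·C(ν)^{1/p}/(1−γ))·‖v − T v‖_{p,ν}. -/

import Mathlib

open Matrix Filter Finset

section MDPDefs

variable {X : Type*} {A : Type*} [Fintype X] [Nonempty X] [DecidableEq X]
  [Fintype A] [Nonempty A]

/-- Transition matrix of a policy: `P^π i j = p i (π i) j`. -/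
noncomputable def Pmat (p : X → A → X → ℝ) (π : X → A) : Matrix X X ℝ :=
  Matrix.of fun i j => p i (π i) j

/-- Expected reward vector of a policy. -/
noncomputable def rvec (p : X → A → X → ℝ) (r : X → A → X → ℝ) (π : X → A) : X → ℝ :=
  fun i => ∑ j, p i (π i) j * r i (π i) j

/-- The Bellman operator of a policy: `T^π v = r^π + γ P^π v`. -/
noncomputable def Tpol (p : X → A → X → ℝ) (r : X → A → X → ℝ) (γ : ℝ)
    (π : X → A) (v : X → ℝ) : X → ℝ :=
  rvec p r π + γ • (Pmat p π).mulVec v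

/-- The optimal Bellman operator: `(T v) i = max_a Σ_j p i a j (r i a j + γ v j)`. -/
noncomputable def Topt (p : X → A → X → ℝ) (r : X → A → X → ℝ) (γ : ℝ)
    (v : X → ℝ) : X → ℝ :=
  fun i => Finset.univ.sup' Finset.univ_nonempty
    (fun a => ∑ j, p i a j * (r i a j + γ * v j))

/-- A policy is greedy with respect to `v` when `T^π v = T v`. -/
def Greedy (p : X → A → X → ℝ) (r : X → A → X → ℝ) (γ : ℝ)
    (π : X → A) (v : X → ℝ) : Prop :=
  Tpol p r γ π v = Topt p r γ v

/-- The value of a policy: `v^π = (I - γ P^π)⁻¹ r^π`. -/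
noncomputable def vpi (p : X → A → X → ℝ) (r : X → A → X → ℝ) (γ : ℝ)
    (π : X → A) : X → ℝ :=
  ((1 : Matrix X X ℝ) - γ • Pmat p π)⁻¹.mulVec (rvec p r π)

/-- The λ policy iteration update operator
`T_λ^π v = (I - λγ P^π)⁻¹ (r^π + (1-λ)γ P^π v)`. -/
noncomputable def Tlam (p : X → A → X → ℝ) (r : X → A → X → ℝ) (γ lam : ℝ)
    (π : X → A) (v : X → ℝ) : X → ℝ :=
  ((1 : Matrix X X ℝ) - (lam * γ) • Pmat p π)⁻¹.mulVec
    (rvec p r π + ((1 - lam) * γ) • (Pmat p π).mulVec v)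

/-- A stochastic matrix: nonnegative entries, all row sums equal to one. -/
def IsStochastic (M : Matrix X X ℝ) : Prop :=
  (∀ i j, 0 ≤ M i j) ∧ ∀ i, ∑ j, M i j = 1

/-- A probability distribution on `X`. -/
def IsDistribution (μ : X → ℝ) : Prop :=
  (∀ x, 0 ≤ μ x) ∧ ∑ x, μ x = 1

/-- Weighted L_p norm `‖u‖_{p,μ} = (Σ_x μ x |u x|^p)^(1/p)`. -/
noncomputable def wLpNorm (pp : ℝ) (μ : X → ℝ) (u : X → ℝ) : ℝ :=
  (∑ x, μ x * |u x| ^ pp) ^ (1 / pp)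

/-- Max norm `‖u‖_∞ = max_x |u x|`. -/
noncomputable def linfNorm (u : X → ℝ) : ℝ :=
  Finset.univ.sup' Finset.univ_nonempty fun x => |u x|

/-- Span seminorm `spn_∞ u = max_x u x - min_x u x`. -/
noncomputable def spanInf (u : X → ℝ) : ℝ :=
  (Finset.univ.sup' Finset.univ_nonempty u) - (Finset.univ.inf' Finset.univ_nonempty u)

/-- Span seminorm `spn_{p,μ} u = 2 min_a ‖u - a e‖_{p,μ}`. -/
noncomputable def spanLp (pp : ℝ) (μ : X → ℝ) (u : X → ℝ) : ℝ :=
  2 * ⨅ a : ℝ, wLpNorm pp μ (fun x => u x - a)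

/-- Componentwise limsup of a sequence of vectors. -/
noncomputable def limsupVec (f : ℕ → X → ℝ) : X → ℝ :=
  fun x => Filter.atTop.limsup fun k => f k x

/-- The product `M k * M (k-1) * ⋯ * M (j+1)` (identity when `k ≤ j`). -/
noncomputable def descProd (M : ℕ → Matrix X X ℝ) (j k : ℕ) : Matrix X X ℝ :=
  ((List.range (k - j)).map fun t => M (k - t)).prod

/-- The mixture distribution `½ μ (M + M')` (as a row vector pushed through matrices). -/
noncomputable def mixDist (μ : X → ℝ) (M M' : Matrix X X ℝ) : X → ℝ :=
  Matrix.vecMul μ (((1 : ℝ) / 2) • (M + M'))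

/-- Concentration coefficient `C(ν) = max_{i,a,j} p i a j / ν j`. -/
noncomputable def concCoef (p : X → A → X → ℝ) (ν : X → ℝ) : ℝ :=
  Finset.univ.sup' Finset.univ_nonempty
    (fun x : X × A × X => p x.1 x.2.1 x.2.2 / ν x.2.2)

/-- `β = (1-λ)γ/(1-λγ)`. -/
noncomputable def betaF (γ lam : ℝ) : ℝ := (1 - lam) * γ / (1 - lam * γ)

/-- `A_k = (1-λγ)(I - λγ P_k)⁻¹ P_k`. -/
noncomputable def Amat (p : X → A → X → ℝ) (γ lam : ℝ) (π : X → A) : Matrix X X ℝ :=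
  (1 - lam * γ) • (((1 : Matrix X X ℝ) - (lam * γ) • Pmat p π)⁻¹ * Pmat p π)

/-- `B_{jk}` (also `E'_{k k₀}` with `k₀ = j`). -/
noncomputable def Bmat (p : X → A → X → ℝ) (γ lam : ℝ) (π : ℕ → X → A) (πs : X → A)
    (j k : ℕ) : Matrix X X ℝ :=
  ((1 - γ) / γ ^ (k - j)) • (
    (lam * γ / (1 - lam * γ)) •
      (∑ i ∈ Finset.Ico j k, (γ ^ (k - 1 - i) * betaF γ lam ^ (i - j)) •
        ((Pmat p πs) ^ (k - 1 - i) * descProd (fun l => Amat p γ lam (π l)) j (i + 1)))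
    + (betaF γ lam ^ (k - j)) •
      (((1 : Matrix X X ℝ) - γ • Pmat p (π k))⁻¹ *
        descProd (fun l => Amat p γ lam (π l)) j k))

/-- `B'_{jk} = γ B_{jk} P_j + (1-γ)(P_*)^{k-j}`. -/
noncomputable def Bmat' (p : X → A → X → ℝ) (γ lam : ℝ) (π : ℕ → X → A) (πs : X → A)
    (j k : ℕ) : Matrix X X ℝ :=
  γ • (Bmat p γ lam π πs j k * Pmat p (π j)) + (1 - γ) • (Pmat p πs) ^ (k - j)

/-- `E_{k k₀} = (1-γ)(P_*)^{k-k₀}(I-γP_*)⁻¹`. -/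
noncomputable def Emat (p : X → A → X → ℝ) (γ : ℝ) (πs : X → A) (k0 k : ℕ) :
    Matrix X X ℝ :=
  (1 - γ) • ((Pmat p πs) ^ (k - k0) * ((1 : Matrix X X ℝ) - γ • Pmat p πs)⁻¹)

/-- `F_{k k₀} = (1-γ)(P_*)^{k-k₀} + γ E'_{k k₀} P_*`. -/
noncomputable def Fmat (p : X → A → X → ℝ) (γ lam : ℝ) (π : ℕ → X → A) (πs : X → A)
    (k0 k : ℕ) : Matrix X X ℝ :=
  (1 - γ) • (Pmat p πs) ^ (k - k0) + γ • (Bmat p γ lam π πs k0 k * Pmat p πs)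

/-- `(1-γ)²(I-γP_{πs})⁻¹ (P_{πa} (I-γP_{πb})⁻¹)`; this gives `C_k` and `C'_k`. -/
noncomputable def Cmat (p : X → A → X → ℝ) (γ : ℝ) (πs πa πb : X → A) :
    Matrix X X ℝ :=
  (1 - γ) ^ 2 • (((1 : Matrix X X ℝ) - γ • Pmat p πs)⁻¹ *
    (Pmat p πa * ((1 : Matrix X X ℝ) - γ • Pmat p πb)⁻¹))

/-- `D = (1-γ) P (I-γP)⁻¹`. -/
noncomputable def Dmat (p : X → A → X → ℝ) (γ : ℝ) (π : X → A) : Matrix X X ℝ :=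
  (1 - γ) • (Pmat p π * ((1 : Matrix X X ℝ) - γ • Pmat p π)⁻¹)

end MDPDefs

/-!
Write `e = v - T v` and `ρ u = max_{i,a} |Σ_j p i a j * u j|`, a seminorm dominated by the sup
norm. Both `T` and `T^π` are `γ`-Lipschitz from `ρ` to the sup norm. Greediness gives
`T v = T^π v`, so `v_* - v = (T v_* - T v) - e` and `v - v^π = e + (T^π v - T^π v^π)`; each of
`ρ (v_* - v)` and `ρ (v - v^π)` is therefore at most `ρ e / (1 - γ)`, and
`v_* - v^π = (T v_* - T v) + (T^π v - T^π v^π)` has sup norm at most `2 γ ρ e / (1 - γ)`.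
Finally `p i a · ≤ C(ν) ν`, so Hölder's inequality gives `ρ e ≤ C(ν)^{1/p} ‖e‖_{p,ν}`.
-/

lemma abs_sum_mul_le_sum_mul_abs {ι : Type*} [Fintype ι] {q : ι → ℝ} (hq0 : ∀ j, 0 ≤ q j)
    (c : ι → ℝ) : |∑ j, q j * c j| ≤ ∑ j, q j * |c j| := by
  refine (Finset.abs_sum_le_sum_abs _ _).trans_eq (Finset.sum_congr rfl fun j _ => ?_)
  rw [abs_mul, abs_of_nonneg (hq0 j)]

section StochasticMatrix

variable {m n : Type*} [Fintype m] [Fintype n]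

lemma abs_sum_mul_le_norm_of_stochastic {q : n → ℝ} (hq0 : ∀ j, 0 ≤ q j)
    (hq1 : ∑ j, q j = 1) (c : n → ℝ) : |∑ j, q j * c j| ≤ ‖c‖ :=
  calc |∑ j, q j * c j| ≤ ∑ j, q j * |c j| := abs_sum_mul_le_sum_mul_abs hq0 c
    _ ≤ ∑ j, q j * ‖c‖ :=
        Finset.sum_le_sum fun j _ => mul_le_mul_of_nonneg_left (norm_le_pi_norm c j) (hq0 j)
    _ = ‖c‖ := by rw [← Finset.sum_mul, hq1, one_mul]

lemma norm_mulVec_le_of_stochastic {M : Matrix m n ℝ} (hM0 : ∀ i j, 0 ≤ M i j)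
    (hM1 : ∀ i, ∑ j, M i j = 1) (u : n → ℝ) : ‖M *ᵥ u‖ ≤ ‖u‖ :=
  (pi_norm_le_iff_of_nonneg (norm_nonneg u)).2 fun i =>
    abs_sum_mul_le_norm_of_stochastic (hM0 i) (hM1 i) u

lemma norm_mulVec_le_div_one_sub {M : Matrix m n ℝ} (hM0 : ∀ i j, 0 ≤ M i j)
    (hM1 : ∀ i, ∑ j, M i j = 1) {γ : ℝ} (hγ : γ < 1) {x f e : n → ℝ} (hx : x = f + e)
    (hf : ‖f‖ ≤ γ * ‖M *ᵥ x‖) : ‖M *ᵥ x‖ ≤ ‖M *ᵥ e‖ / (1 - γ) := by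
  rw [le_div_iff₀ (sub_pos.2 hγ)]
  have : ‖M *ᵥ x‖ ≤ ‖f‖ + ‖M *ᵥ e‖ := by
    rw [hx, Matrix.mulVec_add]
    linarith [norm_add_le (M *ᵥ f) (M *ᵥ e), norm_mulVec_le_of_stochastic hM0 hM1 f]
  linarith

end StochasticMatrix

lemma abs_sum_mul_le_rpow_mul_wLpNorm {X : Type*} [Fintype X] {pp C : ℝ} (hpp : 1 ≤ pp)
    {ν q : X → ℝ} (hν : ∀ j, 0 ≤ ν j) (hq0 : ∀ j, 0 ≤ q j) (hq1 : ∑ j, q j = 1)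
    (hC : 0 ≤ C) (hqC : ∀ j, q j ≤ C * ν j) (c : X → ℝ) :
    |∑ j, q j * c j| ≤ C ^ (1 / pp) * wLpNorm pp ν c := by
  have hνc : 0 ≤ ∑ j, ν j * |c j| ^ pp :=
    Finset.sum_nonneg fun j _ => mul_nonneg (hν j) (by positivity)
  have hqc : ∑ j, q j * |c j| ^ pp ≤ C * ∑ j, ν j * |c j| ^ pp := by
    rw [Finset.mul_sum]
    exact Finset.sum_le_sum fun j _ => by
      rw [← mul_assoc]; exact mul_le_mul_of_nonneg_right (hqC j) (by positivity)
  have holder := Real.inner_le_weight_mul_Lp_of_nonneg Finset.univ hpp q (fun j => |c j|)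
    hq0 fun j => abs_nonneg _
  rw [hq1, Real.one_rpow, one_mul] at holder
  calc |∑ j, q j * c j| ≤ ∑ j, q j * |c j| := abs_sum_mul_le_sum_mul_abs hq0 c
    _ ≤ (∑ j, q j * |c j| ^ pp) ^ pp⁻¹ := holder
    _ ≤ (C * ∑ j, ν j * |c j| ^ pp) ^ pp⁻¹ :=
        Real.rpow_le_rpow (Finset.sum_nonneg fun j _ => mul_nonneg (hq0 j) (by positivity))
          hqc (by positivity)
    _ = C ^ (1 / pp) * wLpNorm pp ν c := by rw [Real.mul_rpow hC hνc, one_div, wLpNorm, one_div]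

lemma Finset.sup'_sub_sup'_le_sup'_abs {ι : Type*} (s : Finset ι) (hs : s.Nonempty)
    (f g : ι → ℝ) : s.sup' hs f - s.sup' hs g ≤ s.sup' hs fun a => |f a - g a| := by
  rw [sub_le_iff_le_add]
  refine Finset.sup'_le _ _ fun a ha => ?_
  have := Finset.le_sup' g ha
  have := Finset.le_sup' (fun a => |f a - g a|) ha
  have := le_abs_self (f a - g a)
  linarith

lemma Finset.abs_sup'_sub_sup'_le {ι : Type*} (s : Finset ι) (hs : s.Nonempty)
    (f g : ι → ℝ) : |s.sup' hs f - s.sup' hs g| ≤ s.sup' hs fun a => |f a - g a| :=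
  abs_sub_le_iff.2 ⟨s.sup'_sub_sup'_le_sup'_abs hs f g, by
    simpa only [abs_sub_comm] using s.sup'_sub_sup'_le_sup'_abs hs g f⟩

section MDP

variable {X A : Type*} [Fintype X]

lemma linfNorm_eq_norm [Nonempty X] (u : X → ℝ) : linfNorm u = ‖u‖ :=
  le_antisymm (Finset.sup'_le _ _ fun x _ => norm_le_pi_norm u x)
    ((pi_norm_le_iff_of_nonempty _).2 fun x => Finset.le_sup' (fun x => |u x|) (Finset.mem_univ x))

def stateActionMat (p : X → A → X → ℝ) : Matrix (X × A) X ℝ :=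
  Matrix.of fun ia j => p ia.1 ia.2 j

lemma norm_Pmat_mulVec_le [Fintype A] (p : X → A → X → ℝ) (π : X → A) (u : X → ℝ) :
    ‖Pmat p π *ᵥ u‖ ≤ ‖stateActionMat p *ᵥ u‖ :=
  (pi_norm_le_iff_of_nonneg (norm_nonneg _)).2 fun i =>
    norm_le_pi_norm (stateActionMat p *ᵥ u) (i, π i)

lemma norm_stateActionMat_mulVec_le [Fintype A] [Nonempty X] [Nonempty A] {p : X → A → X → ℝ}
    (hp0 : ∀ i a j, 0 ≤ p i a j) (hp1 : ∀ i a, ∑ j, p i a j = 1) {ν : X → ℝ}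
    (hν : ∀ j, 0 < ν j) {pp : ℝ} (hpp : 1 ≤ pp) (u : X → ℝ) :
    ‖stateActionMat p *ᵥ u‖ ≤ concCoef p ν ^ (1 / pp) * wLpNorm pp ν u := by
  have hle : ∀ i a j, p i a j ≤ concCoef p ν * ν j := fun i a j =>
    (div_le_iff₀ (hν j)).1 <| Finset.le_sup'
      (fun x : X × A × X => p x.1 x.2.1 x.2.2 / ν x.2.2) (Finset.mem_univ (i, a, j))
  have hC : 0 ≤ concCoef p ν := by
    obtain ⟨i⟩ := ‹Nonempty X›
    obtain ⟨a⟩ := ‹Nonempty A›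
    exact nonneg_of_mul_nonneg_left ((hp0 i a i).trans (hle i a i)) (hν i)
  refine (pi_norm_le_iff_of_nonempty _).2 fun ⟨i, a⟩ => ?_
  exact abs_sum_mul_le_rpow_mul_wLpNorm hpp (fun j => (hν j).le) (hp0 i a) (hp1 i a) hC
    (hle i a) u

lemma norm_Topt_sub_Topt_le [Fintype A] [Nonempty A] (p r : X → A → X → ℝ) (γ : ℝ) (u w : X → ℝ) :
    ‖Topt p r γ u - Topt p r γ w‖ ≤ |γ| * ‖stateActionMat p *ᵥ (u - w)‖ := by
  refine (pi_norm_le_iff_of_nonneg (by positivity)).2 fun i => ?_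
  refine (Finset.abs_sup'_sub_sup'_le _ _ _ _).trans (Finset.sup'_le _ _ fun a _ => ?_)
  have hrow : ∑ j, p i a j * (r i a j + γ * u j) - ∑ j, p i a j * (r i a j + γ * w j)
      = γ * (stateActionMat p *ᵥ (u - w)) (i, a) := by
    simp only [stateActionMat, Matrix.mulVec, dotProduct, Matrix.of_apply, Pi.sub_apply,
      Finset.mul_sum, ← Finset.sum_sub_distrib]
    exact Finset.sum_congr rfl fun j _ => by ring
  rw [hrow, abs_mul]
  exact mul_le_mul_of_nonneg_left (norm_le_pi_norm (stateActionMat p *ᵥ (u - w)) (i, a))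
    (abs_nonneg γ)

lemma Tpol_sub_Tpol (p r : X → A → X → ℝ) (γ : ℝ) (π : X → A) (u w : X → ℝ) :
    Tpol p r γ π u - Tpol p r γ π w = γ • Pmat p π *ᵥ (u - w) := by
  simp only [Tpol, Matrix.mulVec_sub, smul_sub]
  abel

lemma norm_Tpol_sub_Tpol_le [Fintype A] (p r : X → A → X → ℝ) (γ : ℝ) (π : X → A) (u w : X → ℝ) :
    ‖Tpol p r γ π u - Tpol p r γ π w‖ ≤ |γ| * ‖stateActionMat p *ᵥ (u - w)‖ := by
  rw [Tpol_sub_Tpol, norm_smul, Real.norm_eq_abs]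
  exact mul_le_mul_of_nonneg_left (norm_Pmat_mulVec_le p π _) (abs_nonneg γ)

variable [DecidableEq X]

lemma isUnit_one_sub_smul_Pmat {p : X → A → X → ℝ} (hp0 : ∀ i a j, 0 ≤ p i a j)
    (hp1 : ∀ i a, ∑ j, p i a j = 1) {γ : ℝ} (hγ : |γ| < 1) (π : X → A) :
    IsUnit (1 - γ • Pmat p π) := by
  rw [← Matrix.mulVec_injective_iff_isUnit]
  intro u w huw
  have hker : u - w = γ • Pmat p π *ᵥ (u - w) := by
    have h0 : (1 - γ • Pmat p π) *ᵥ (u - w) = 0 := by rw [Matrix.mulVec_sub, huw, sub_self]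
    rwa [Matrix.sub_mulVec, Matrix.one_mulVec, Matrix.smul_mulVec, sub_eq_zero] at h0
  have hle : ‖u - w‖ ≤ |γ| * ‖u - w‖ :=
    calc ‖u - w‖ = |γ| * ‖Pmat p π *ᵥ (u - w)‖ := by
          rw [← Real.norm_eq_abs, ← norm_smul, ← hker]
      _ ≤ |γ| * ‖u - w‖ := mul_le_mul_of_nonneg_left
          (norm_mulVec_le_of_stochastic (fun i j => hp0 i (π i) j) (fun i => hp1 i (π i)) _)
          (abs_nonneg γ)
  have : ‖u - w‖ = 0 := by nlinarith [norm_nonneg (u - w)]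
  exact sub_eq_zero.1 (norm_eq_zero.1 this)

lemma Tpol_vpi {p : X → A → X → ℝ} (hp0 : ∀ i a j, 0 ≤ p i a j)
    (hp1 : ∀ i a, ∑ j, p i a j = 1) (r : X → A → X → ℝ) {γ : ℝ} (hγ : |γ| < 1)
    (π : X → A) : Tpol p r γ π (vpi p r γ π) = vpi p r γ π := by
  have hdet := (Matrix.isUnit_iff_isUnit_det _).1 (isUnit_one_sub_smul_Pmat hp0 hp1 hγ π)
  have h : (1 - γ • Pmat p π) *ᵥ vpi p r γ π = rvec p r π := by
    rw [vpi, Matrix.mulVec_mulVec, Matrix.mul_nonsing_inv _ hdet, Matrix.one_mulVec]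
  rw [Matrix.sub_mulVec, Matrix.one_mulVec, Matrix.smul_mulVec, sub_eq_iff_eq_add] at h
  rw [Tpol, ← h]

end MDP

theorem approx_VI_value_converges_general
    {X A : Type*} [Fintype X] [Nonempty X] [DecidableEq X] [Fintype A] [Nonempty A]
    (p : X → A → X → ℝ) (r : X → A → X → ℝ) (γ : ℝ)
    (hp0 : ∀ i a j, 0 ≤ p i a j) (hp1 : ∀ i a, ∑ j, p i a j = 1)
    (hγ0 : 0 < γ) (hγ1 : γ < 1)
    (vstar : X → ℝ) (hfix : Topt p r γ vstar = vstar)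
    -- the values converge to `vlim`, and `πg` is greedy with respect to `vlim`
    (vlim : X → ℝ)
    (πg : X → A) (hπg : Greedy p r γ πg vlim)
    (ν : X → ℝ) (hνpos : ∀ j, 0 < ν j)
    (pp : ℝ) (hpp : 1 ≤ pp) :
    linfNorm (vstar - vpi p r γ πg) ≤
      2 * γ * concCoef p ν ^ (1 / pp) / (1 - γ) *
        wLpNorm pp ν (vlim - Topt p r γ vlim) := by
  set P := stateActionMat p
  have hP0 : ∀ ia j, 0 ≤ P ia j := fun ia j => hp0 ia.1 ia.2 j
  have hP1 : ∀ ia, ∑ j, P ia j = 1 := fun ia => hp1 ia.1 ia.2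
  have hγ : |γ| = γ := abs_of_pos hγ0
  have hTopt (u w : X → ℝ) : ‖Topt p r γ u - Topt p r γ w‖ ≤ γ * ‖P *ᵥ (u - w)‖ := by
    simpa only [hγ] using norm_Topt_sub_Topt_le p r γ u w
  have hTpol (u w : X → ℝ) : ‖Tpol p r γ πg u - Tpol p r γ πg w‖ ≤ γ * ‖P *ᵥ (u - w)‖ := by
    simpa only [hγ] using norm_Tpol_sub_Tpol_le p r γ πg u w
  have hvpi := Tpol_vpi hp0 hp1 r (hγ.trans_lt hγ1) πg
  have hgreedy : Tpol p r γ πg vlim = Topt p r γ vlim := hπg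
  set e := vlim - Topt p r γ vlim
  have hopt : ‖P *ᵥ (vstar - vlim)‖ ≤ ‖P *ᵥ e‖ / (1 - γ) := by
    simpa only [Matrix.mulVec_neg, norm_neg] using norm_mulVec_le_div_one_sub hP0 hP1 hγ1
      (by simp only [e]; rw [hfix]; abel : vstar - vlim = (Topt p r γ vstar - Topt p r γ vlim) + -e)
      (hTopt vstar vlim)
  have hpol : ‖P *ᵥ (vlim - vpi p r γ πg)‖ ≤ ‖P *ᵥ e‖ / (1 - γ) :=
    norm_mulVec_le_div_one_sub hP0 hP1 hγ1
      (by simp only [e]; rw [hgreedy, hvpi]; abel : vlim - vpi p r γ πg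
        = (Tpol p r γ πg vlim - Tpol p r γ πg (vpi p r γ πg)) + e)
      (hTpol vlim (vpi p r γ πg))
  have hsplit : vstar - vpi p r γ πg = (Topt p r γ vstar - Topt p r γ vlim)
      + (Tpol p r γ πg vlim - Tpol p r γ πg (vpi p r γ πg)) := by
    rw [hgreedy, hvpi, hfix]; abel
  calc linfNorm (vstar - vpi p r γ πg) = ‖vstar - vpi p r γ πg‖ := linfNorm_eq_norm _
    _ ≤ γ * ‖P *ᵥ (vstar - vlim)‖ + γ * ‖P *ᵥ (vlim - vpi p r γ πg)‖ := by
        rw [hsplit]; exact (norm_add_le _ _).trans (add_le_add (hTopt _ _) (hTpol _ _))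
    _ ≤ γ * (‖P *ᵥ e‖ / (1 - γ)) + γ * (‖P *ᵥ e‖ / (1 - γ)) := by gcongr
    _ = 2 * γ / (1 - γ) * ‖P *ᵥ e‖ := by ring
    _ ≤ 2 * γ / (1 - γ) * (concCoef p ν ^ (1 / pp) * wLpNorm pp ν e) :=
        mul_le_mul_of_nonneg_left (norm_stateActionMat_mulVec_le hp0 hp1 hνpos hpp e)
          (div_nonneg (by positivity) (sub_pos.2 hγ1).le)
    _ = 2 * γ * concCoef p ν ^ (1 / pp) / (1 - γ) * wLpNorm pp ν e := by ring

/-- Performance of Approximate Value Iteration in case of convergence. -/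
theorem approx_VI_value_converges
    {X A : Type*} [Fintype X] [Nonempty X] [DecidableEq X] [Fintype A] [Nonempty A]
    (p : X → A → X → ℝ) (r : X → A → X → ℝ) (γ : ℝ)
    (hp0 : ∀ i a j, 0 ≤ p i a j) (hp1 : ∀ i a, ∑ j, p i a j = 1)
    (hγ0 : 0 < γ) (hγ1 : γ < 1)
    (vstar : X → ℝ) (hfix : Topt p r γ vstar = vstar)
    -- approximate value iteration with errors ε
    (v : ℕ → X → ℝ) (ε : ℕ → X → ℝ)
    (hupd : ∀ k, v (k + 1) = Topt p r γ (v k) + ε (k + 1))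
    -- the values converge to `vlim`, and `πg` is greedy with respect to `vlim`
    (vlim : X → ℝ) (hconv : Filter.Tendsto v Filter.atTop (nhds vlim))
    (πg : X → A) (hπg : Greedy p r γ πg vlim)
    (ν : X → ℝ) (hν : IsDistribution ν) (hνpos : ∀ j, 0 < ν j)
    (pp : ℝ) (hpp : 1 ≤ pp) :
    linfNorm (vstar - vpi p r γ πg) ≤
      2 * γ * concCoef p ν ^ (1 / pp) / (1 - γ) *
        wLpNorm pp ν (vlim - Topt p r γ vlim) :=
  approx_VI_value_converges_general p r γ hp0 hp1 hγ0 hγ1 vstar hfix vlim πg hπg ν hνpos pp hpp
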